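/- Fix n ≥ 1 and let p₁,…,p_{2n} ∈ (0,1) with q_j := 1 − p_j and q₀ := 1, and set S_m := Σ_{j=1}^m q_{j−1} p_j. Define F(p) = (1/2)Σ_{j=1}^n (n−j+1) log(q_{2j−2} p_{2j−1} q_{2j−1} p_{2j}) + (1/2) log(p₁ p₂ q₁) − log(S_{2n}). If (p₁,…,p_{2n}) is a critical point of F (all partial derivatives vanish), then the conditions ∂F/∂p_{2n} = 0 and ∂F/∂p_{2n−1} = 0 imply q_{2n−1} p_{2n} = S_{2n−1} and p_{2n} q_{2n−1} = q_{2n−2} p_{2n−1}, hence S_{2n−2} = 0, which contradicts p_j ∈ (0,1) for all j. Consequently F has no critical point in (0,1)^{2n}. -/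

import Mathlib

/-- `q j = 1 - p j`, with `q 0 := 1`. -/
noncomputable def qJ (p : ℕ → ℝ) (j : ℕ) : ℝ := if j = 0 then 1 else 1 - p j

/-- `S m = ∑_{j=1}^m q_{j-1} p_j`. -/
noncomputable def SJ (p : ℕ → ℝ) (m : ℕ) : ℝ :=
  ∑ j ∈ Finset.Icc 1 m, qJ p (j - 1) * p j

/-- The log-criterion `F` for the Jeffreys prior in canonical moments. -/
noncomputable def FJ (n : ℕ) (p : ℕ → ℝ) : ℝ :=
  (1 / 2) * ∑ j ∈ Finset.Icc 1 n, ((n : ℝ) - j + 1) *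
      Real.log (qJ p (2 * j - 2) * p (2 * j - 1) * qJ p (2 * j - 1) * p (2 * j)) +
    (1 / 2) * Real.log (p 1 * p 2 * qJ p 1) - Real.log (SJ p (2 * n))

/-!
Only the last two coordinates `a = p_{2n-1}`, `b = p_{2n}` are needed. For `n ≥ 2` they enter `F`
only through `½ log (q a (1 - a) b) - log S` with `q = q_{2n-2}` and
`S = S_{2n} = s + q a + (1 - a) b`, `s = S_{2n-2}`. Stationarity in `b` gives `S = 2 (1 - a) b`,
and then stationarity in `a` gives `(1 - a) b = q a`; together they force `s = 0`, whereas
`s = S_{2n-2} > 0` on `(0,1)^{2n}`.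
-/

open Finset Function Real

theorem qJ_of_ne_zero {p : ℕ → ℝ} {j : ℕ} (hj : j ≠ 0) : qJ p j = 1 - p j := if_neg hj

theorem qJ_update_of_ne {p : ℕ → ℝ} {i j : ℕ} (h : j ≠ i) (t : ℝ) :
    qJ (update p i t) j = qJ p j := by
  simp [qJ, update_of_ne h]

theorem qJ_pos {p : ℕ → ℝ} {N j : ℕ} (hp : ∀ i ∈ Icc 1 N, p i ∈ Set.Ioo (0 : ℝ) 1)
    (hj : j ≤ N) : 0 < qJ p j := by
  rcases Nat.eq_zero_or_pos j with rfl | hj0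
  · simp [qJ]
  · rw [qJ_of_ne_zero hj0.ne']
    linarith [(hp j (mem_Icc.mpr ⟨hj0, hj⟩)).2]

theorem SJ_succ (p : ℕ → ℝ) (m : ℕ) : SJ p (m + 1) = SJ p m + qJ p m * p (m + 1) := by
  rw [SJ, sum_Icc_succ_top (by omega), Nat.add_sub_cancel, ← SJ]

theorem SJ_add_two (p : ℕ → ℝ) (m : ℕ) :
    SJ p (m + 2) = SJ p m + qJ p m * p (m + 1) + (1 - p (m + 1)) * p (m + 2) := by
  rw [SJ_succ, SJ_succ, qJ_of_ne_zero (j := m + 1) (by omega)]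

theorem SJ_update_of_lt {p : ℕ → ℝ} {i m : ℕ} (h : m < i) (t : ℝ) :
    SJ (update p i t) m = SJ p m := by
  refine sum_congr rfl fun j hj => ?_
  rw [mem_Icc] at hj
  rw [qJ_update_of_ne (by omega), update_of_ne (by omega)]

theorem SJ_pos {p : ℕ → ℝ} {N m : ℕ} (hp : ∀ i ∈ Icc 1 N, p i ∈ Set.Ioo (0 : ℝ) 1)
    (hm : 1 ≤ m) (hmN : m ≤ N) : 0 < SJ p m := by
  refine sum_pos (fun j hj => ?_) ⟨1, mem_Icc.mpr ⟨le_rfl, hm⟩⟩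
  rw [mem_Icc] at hj
  exact mul_pos (qJ_pos hp (by omega)) (hp j (mem_Icc.mpr ⟨hj.1, by omega⟩)).1

/-- `FJ (k + 2)` without the terms that involve `p (2 * k + 3)` and `p (2 * k + 4)`. -/
noncomputable def FJHead (k : ℕ) (p : ℕ → ℝ) : ℝ :=
  (1 / 2) * ∑ j ∈ Icc 1 (k + 1), (((k + 2 : ℕ) : ℝ) - j + 1) *
      log (qJ p (2 * j - 2) * p (2 * j - 1) * qJ p (2 * j - 1) * p (2 * j)) +
    (1 / 2) * log (p 1 * p 2 * qJ p 1)

theorem FJHead_update_of_lt {p : ℕ → ℝ} {k i : ℕ} (h : 2 * k + 2 < i) (t : ℝ) :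
    FJHead k (update p i t) = FJHead k p := by
  rw [FJHead, FJHead, qJ_update_of_ne (by omega), update_of_ne (show 1 ≠ i by omega),
    update_of_ne (show 2 ≠ i by omega)]
  congr 2
  refine sum_congr rfl fun j hj => ?_
  rw [mem_Icc] at hj
  rw [qJ_update_of_ne (show 2 * j - 2 ≠ i by omega), qJ_update_of_ne (show 2 * j - 1 ≠ i by omega),
    update_of_ne (show 2 * j - 1 ≠ i by omega), update_of_ne (show 2 * j ≠ i by omega)]

/-- `F` as a function of `a = p_{2n-1}` and `b = p_{2n}`, where `c` collects the terms free of
them, `q = q_{2n-2}` and `s = S_{2n-2}`. -/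
noncomputable def lastPairF (c q s a b : ℝ) : ℝ :=
  c + 1 / 2 * log (q * a * (1 - a) * b) - log (s + q * a + (1 - a) * b)

theorem FJ_eq_lastPairF (k : ℕ) (p : ℕ → ℝ) :
    FJ (k + 2) p = lastPairF (FJHead k p) (qJ p (2 * k + 2)) (SJ p (2 * k + 2))
      (p (2 * k + 3)) (p (2 * k + 4)) := by
  rw [FJ, sum_Icc_succ_top (by omega), show 2 * (k + 2) = 2 * k + 2 + 2 by ring, SJ_add_two,
    show 2 * k + 2 + 2 - 2 = 2 * k + 2 by omega, show 2 * k + 2 + 2 - 1 = 2 * k + 3 by omega,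
    qJ_of_ne_zero (j := 2 * k + 3) (by omega), lastPairF, FJHead]
  push_cast
  ring_nf

theorem FJ_update_penultimate (k : ℕ) (p : ℕ → ℝ) :
    (fun t => FJ (k + 2) (update p (2 * k + 3) t)) = fun t =>
      lastPairF (FJHead k p) (qJ p (2 * k + 2)) (SJ p (2 * k + 2)) t (p (2 * k + 4)) := by
  ext t
  rw [FJ_eq_lastPairF, FJHead_update_of_lt (by omega), qJ_update_of_ne (by omega),
    SJ_update_of_lt (by omega), update_self, update_of_ne (by omega)]

theorem FJ_update_last (k : ℕ) (p : ℕ → ℝ) :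
    (fun t => FJ (k + 2) (update p (2 * k + 4) t)) =
      lastPairF (FJHead k p) (qJ p (2 * k + 2)) (SJ p (2 * k + 2)) (p (2 * k + 3)) := by
  ext t
  rw [FJ_eq_lastPairF, FJHead_update_of_lt (by omega), qJ_update_of_ne (by omega),
    SJ_update_of_lt (by omega), update_self, update_of_ne (by omega)]

section

variable {c q s a b : ℝ}

theorem hasDerivAt_lastPairF_fst (hq : q ≠ 0) (ha : a ≠ 0) (ha' : 1 - a ≠ 0) (hb : b ≠ 0)
    (hS : s + q * a + (1 - a) * b ≠ 0) :
    HasDerivAt (fun t => lastPairF c q s t b)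
      ((1 - 2 * a) / (2 * a * (1 - a)) - (q - b) / (s + q * a + (1 - a) * b)) a := by
  have hid := hasDerivAt_id' a
  have hlog := (((hid.const_mul q).fun_mul (hid.const_sub 1)).mul_const b).log (by simp [*])
  have hlogS := (((hid.const_mul q).const_add s).fun_add ((hid.const_sub 1).mul_const b)).log hS
  refine ((hlog.const_mul (1 / 2)).const_add c |>.sub hlogS).congr_deriv ?_
  field_simp
  ring

theorem hasDerivAt_lastPairF_snd (hq : q ≠ 0) (ha : a ≠ 0) (ha' : 1 - a ≠ 0) (hb : b ≠ 0)
    (hS : s + q * a + (1 - a) * b ≠ 0) :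
    HasDerivAt (lastPairF c q s a) (1 / (2 * b) - (1 - a) / (s + q * a + (1 - a) * b)) b := by
  have hid := hasDerivAt_id' b
  have hlog := (hid.const_mul (q * a * (1 - a))).log (by simp [*])
  have hlogS := ((hid.const_mul (1 - a)).const_add (s + q * a)).log hS
  refine ((hlog.const_mul (1 / 2)).const_add c |>.sub hlogS).congr_deriv ?_
  field_simp

theorem eq_zero_of_hasDerivAt_lastPairF (hq : q ≠ 0) (ha : a ≠ 0)
    (ha' : 1 - a ≠ 0) (hb : b ≠ 0) (hS : s + q * a + (1 - a) * b ≠ 0)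
    (hda : HasDerivAt (fun t => lastPairF c q s t b) 0 a)
    (hdb : HasDerivAt (lastPairF c q s a) 0 b) : s = 0 := by
  have ea := (hasDerivAt_lastPairF_fst hq ha ha' hb hS).unique hda
  have eb := (hasDerivAt_lastPairF_snd hq ha ha' hb hS).unique hdb
  rw [sub_eq_zero, div_eq_div_iff (by simp [*]) hS] at ea eb
  refine (mul_eq_zero.mp ?_).resolve_left ha'
  linear_combination (ea + eb) / 2

end

/-- The Jeffreys-prior criterion `F` has no critical point in `(0,1)^{2n}`. -/
theorem FJ_no_critical_point (n : ℕ) (hn : 2 ≤ n) :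
    ¬ ∃ p : ℕ → ℝ,
      (∀ j ∈ Finset.Icc 1 (2 * n), p j ∈ Set.Ioo (0 : ℝ) 1) ∧
      (∀ j ∈ Finset.Icc 1 (2 * n),
        HasDerivAt (fun t => FJ n (Function.update p j t)) 0 (p j)) := by
  rintro ⟨p, hp, hcrit⟩
  obtain ⟨k, rfl⟩ : ∃ k, n = k + 2 := ⟨n - 2, by omega⟩
  have hmem (j : ℕ) (h1 : 1 ≤ j) (h2 : j ≤ 2 * k + 4) : j ∈ Icc 1 (2 * (k + 2)) :=
    mem_Icc.mpr ⟨h1, by omega⟩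
  have hda := hcrit (2 * k + 3) (hmem _ (by omega) (by omega))
  have hdb := hcrit (2 * k + 4) (hmem _ (by omega) le_rfl)
  rw [FJ_update_penultimate] at hda
  rw [FJ_update_last] at hdb
  obtain ⟨ha0, ha1⟩ := hp _ (hmem (2 * k + 3) (by omega) (by omega))
  have hb0 := (hp _ (hmem (2 * k + 4) (by omega) le_rfl)).1
  have hq := qJ_pos (j := 2 * k + 2) hp (by omega)
  have hS : 0 < SJ p (2 * k + 2 + 2) := SJ_pos hp (by omega) (by omega)
  rw [SJ_add_two] at hS
  exact (SJ_pos hp (m := 2 * k + 2) (by omega) (by omega)).ne'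
    (eq_zero_of_hasDerivAt_lastPairF hq.ne' ha0.ne' (by linarith) hb0.ne' hS.ne' hda hdb)
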